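/- arXiv:2112.12223 — 3 statements merged into one kernel-verified Lean document; each statement's English description precedes it below -/
import Mathlib

section
/- Let Γ be a countable group acting freely and measure-preservingly on a standard Borel probability space (X, μ), let Λ ≤ Γ be a subgroup, let X' ⊆ X be a Λ-invariant conull Borel set, let J be a finite set, let (A_j)_{j∈J} be Borel subsets of X', and let (T_j)_{j∈J} be nonempty finite subsets of Λ such that the sets (t·A_j)_{j∈J, t∈T_j} are pairwise disjoint and their union equals X'. For γ ∈ Γ and j ∈ J set W_{(γ,j)} := (γ·A_j) × (γ·T_j^{−1}) ⊆ X × Γ, where T_j^{−1} = {t^{−1} : t ∈ T_j}. Then: (i) the sets (W_{(γ,j)})_{γ∈Γ, j∈J} are pairwise disjoint; (ii) their union contains the set {(x, λ) ∈ X × Γ : λ^{−1}·x ∈ X'}, which is conull in X × Γ with respect to the product of μ and the counting measure on Γ; (iii) for all γ', γ ∈ Γ and j ∈ J: γ'·W_{(γ,j)} = W_{(γ'γ, j)}, where Γ acts diagonally on X × Γ (by the given action on X and by left translation on Γ); (iv) for every λ ∈ Γ there are only finitely many pairs (γ, j) with W_{(γ,j)} ∩ (X × {λ}) ≠ ∅.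 -/
open Pointwise MeasureTheory

/-- Let `Γ` be a countable group acting freely and
measure-preservingly on a standard Borel probability space `(X, μ)`, let `Λ ≤ Γ`
be a subgroup, let `X' ⊆ X` be a `Λ`-invariant conull Borel set, `J` a finite set,
`(A_j)` Borel subsets of `X'` and `(T_j)` nonempty finite subsets of `Λ` such that
the translates `(t • A_j)_{j, t ∈ T_j}` are pairwise disjoint with union `X'`.
For `W_{(γ,j)} := (γ • A_j) ×ˢ (γ • T_j⁻¹) ⊆ X × Γ` we have:
(i) the `W_{(γ,j)}` are pairwise disjoint;
(ii) their union contains `{(x, λ) : λ⁻¹ • x ∈ X'}`, which is conull for the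
     product of `μ` with the counting measure on `Γ`;
(iii) `γ' • W_{(γ,j)} = W_{(γ'γ, j)}` for the diagonal action on `X × Γ`;
(iv) for every `λ ∈ Γ` only finitely many `(γ, j)` satisfy `W_{(γ,j)} ∩ (X × {λ}) ≠ ∅`. -/
theorem rokhlin_partition_of_product
    (Γ : Type*) [Group Γ] [Countable Γ] [MeasurableSpace Γ] [MeasurableSingletonClass Γ]
    (X : Type*) [MeasurableSpace X] [StandardBorelSpace X]
    (μ : Measure X) [IsProbabilityMeasure μ]
    [MulAction Γ X]
    (hmp : ∀ γ : Γ, MeasurePreserving (fun x : X => γ • x) μ μ)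
    (hfree : ∀ (γ : Γ) (x : X), γ • x = x → γ = 1)
    (Λ : Subgroup Γ)
    (X' : Set X) (hX'meas : MeasurableSet X') (hX'conull : μ X'ᶜ = 0)
    (hX'inv : ∀ γ : Γ, γ ∈ Λ → γ • X' = X')
    (J : Type*) [Finite J]
    (A : J → Set X) (hAmeas : ∀ j, MeasurableSet (A j)) (hAsub : ∀ j, A j ⊆ X')
    (T : J → Finset Γ) (hTne : ∀ j, (T j).Nonempty) (hTΛ : ∀ j, ∀ t ∈ T j, t ∈ Λ)
    (hdisj : ∀ (j : J) (t : Γ) (_ : t ∈ T j) (j' : J) (t' : Γ) (_ : t' ∈ T j'),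
      (j, t) ≠ (j', t') → Disjoint (t • A j) (t' • A j'))
    (hunion : (⋃ (j : J), ⋃ (t : Γ) (_ : t ∈ T j), t • A j) = X')
    -- the sets `W_{(γ,j)} = (γ • A_j) ×ˢ (γ • T_j⁻¹)`:
    (W : Γ × J → Set (X × Γ))
    (hW : ∀ (γ : Γ) (j : J), W (γ, j) = (γ • A j) ×ˢ (γ • ((T j : Set Γ)⁻¹))) :
    -- (i) pairwise disjoint
    (∀ q q' : Γ × J, q ≠ q' → Disjoint (W q) (W q')) ∧
    -- (ii) the union contains a conull set
    ({p : X × Γ | p.2⁻¹ • p.1 ∈ X'} ⊆ ⋃ q : Γ × J, W q) ∧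
    (μ.prod (Measure.count : Measure Γ)) {p : X × Γ | p.2⁻¹ • p.1 ∈ X'}ᶜ = 0 ∧
    -- (iii) equivariance for the diagonal action on `X × Γ`
    (∀ (γ' γ : Γ) (j : J),
      (fun p : X × Γ => (γ' • p.1, γ' * p.2)) '' W (γ, j) = W (γ' * γ, j)) ∧
    -- (iv) finite type
    (∀ l : Γ, {q : Γ × J | ∃ x : X, (x, l) ∈ W q}.Finite) := by

  have hWmem : ∀ (γ : Γ) (j : J) (x : X) (s : Γ),
      (x, s) ∈ W (γ, j) ↔ γ⁻¹ • x ∈ A j ∧ s⁻¹ * γ ∈ T j := by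
    intro γ j x s
    rw [hW]
    constructor
    · rintro ⟨hx, hs⟩
      rw [Set.mem_smul_set_iff_inv_smul_mem] at hx hs
      refine ⟨hx, ?_⟩
      rw [smul_eq_mul, Set.mem_inv, mul_inv_rev, inv_inv] at hs
      simpa using hs
    · rintro ⟨hx, hs⟩
      refine ⟨Set.mem_smul_set_iff_inv_smul_mem.2 hx, Set.mem_smul_set_iff_inv_smul_mem.2 ?_⟩
      rw [smul_eq_mul, Set.mem_inv, mul_inv_rev, inv_inv]
      simpa using hs
  refine ⟨?_, ?_, ?_, ?_, ?_⟩
  · -- (i)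
    rintro ⟨γ, j⟩ ⟨γ', j'⟩ hne
    rw [Set.disjoint_left]
    rintro ⟨x, s⟩ h1 h2
    rw [hWmem] at h1 h2
    obtain ⟨ha, ht⟩ := h1
    obtain ⟨ha', ht'⟩ := h2
    have hpt : s⁻¹ • x ∈ (s⁻¹ * γ) • A j :=
      Set.mem_smul_set.2 ⟨γ⁻¹ • x, ha, by rw [mul_smul, smul_inv_smul]⟩
    have hpt' : s⁻¹ • x ∈ (s⁻¹ * γ') • A j' :=
      Set.mem_smul_set.2 ⟨γ'⁻¹ • x, ha', by rw [mul_smul, smul_inv_smul]⟩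
    by_cases hjj : (j, s⁻¹ * γ) = (j', s⁻¹ * γ')
    · apply hne
      have h1 : j = j' := congrArg Prod.fst hjj
      have h2 : s⁻¹ * γ = s⁻¹ * γ' := congrArg Prod.snd hjj
      have : γ = γ' := by
        have := mul_left_cancel h2
        exact this
      simp [this, h1]
    · exact (Set.disjoint_left.1 (hdisj j _ ht j' _ ht' hjj)) hpt hpt'
  · -- (ii) containment
    rintro ⟨x, l⟩ hx
    have : l⁻¹ • x ∈ ⋃ (j : J), ⋃ (t : Γ) (_ : t ∈ T j), t • A j := by
      rw [hunion]; exact hx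
    simp only [Set.mem_iUnion] at this
    obtain ⟨j, t, ht, hmem⟩ := this
    rw [Set.mem_smul_set_iff_inv_smul_mem] at hmem
    refine Set.mem_iUnion.2 ⟨(l * t, j), ?_⟩
    rw [hWmem]
    constructor
    · rw [mul_inv_rev, mul_smul]
      exact hmem
    · simpa using ht
  · -- (ii) conull
    haveI : SFinite (Measure.count : Measure Γ) := by
      unfold Measure.count; infer_instance
    have hsub : {p : X × Γ | p.2⁻¹ • p.1 ∈ X'}ᶜ ⊆
        ⋃ l : Γ, ((fun x : X => l⁻¹ • x) ⁻¹' X'ᶜ) ×ˢ ({l} : Set Γ) := by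
      rintro ⟨x, l⟩ hp
      simp only [Set.mem_compl_iff, Set.mem_setOf_eq] at hp
      exact Set.mem_iUnion.2 ⟨l, ⟨hp, rfl⟩⟩
    refine measure_mono_null hsub (measure_iUnion_null fun l => ?_)
    have h1 : (μ.prod (Measure.count : Measure Γ))
        (((fun x : X => l⁻¹ • x) ⁻¹' X'ᶜ) ×ˢ ({l} : Set Γ))
        = μ ((fun x : X => l⁻¹ • x) ⁻¹' X'ᶜ) * Measure.count ({l} : Set Γ) :=
      Measure.prod_prod _ _
    rw [h1, (hmp l⁻¹).measure_preimage hX'meas.compl.nullMeasurableSet, hX'conull,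
      zero_mul]
  · -- (iii)
    intro γ' γ j
    ext ⟨x, s⟩
    simp only [Set.mem_image, Prod.exists, Prod.mk.injEq]
    constructor
    · rintro ⟨a, b, hab, hx, hs⟩
      subst hx hs
      rw [hWmem] at hab ⊢
      obtain ⟨ha, hb⟩ := hab
      constructor
      · rw [mul_inv_rev, mul_smul, inv_smul_smul]
        exact ha
      · rw [mul_inv_rev]
        simpa [mul_assoc] using hb
    · rintro h
      rw [hWmem] at h
      obtain ⟨hx, hs⟩ := h
      refine ⟨γ'⁻¹ • x, γ'⁻¹ * s, ?_, by simp, by simp⟩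
      rw [hWmem]
      constructor
      · rw [mul_inv_rev, mul_smul] at hx
        simpa [mul_smul] using hx
      · simpa [mul_inv_rev, mul_assoc] using hs
  · -- (iv)
    intro l
    apply Set.Finite.subset
      (Set.finite_iUnion (fun j : J => ((T j).finite_toSet.image (fun t => ((l * t, j) : Γ × J)))))
    rintro ⟨γ, j⟩ ⟨x, hx⟩
    rw [hWmem] at hx
    refine Set.mem_iUnion.2 ⟨j, ⟨l⁻¹ * γ, hx.2, ?_⟩⟩
    simp
end

section
/- Let Γ be a countable group, let I be a nonempty finite set, let (Γ_i)_{i∈I} be subgroups of Γ, let F ⊆ Γ be a finite set, let δ > 0, and let Γ act freely and measure-preservingly on a standard Borel probability space (X, μ). Suppose that for each i ∈ I there are a finite set J_i, Borel sets (A_{i,j})_{j∈J_i} in X, and finite subsets (T_{i,j})_{j∈J_i} of Γ_i, each containing the neutral element and each (F ∩ Γ_i, δ)-invariant, such that the sets (t·A_{i,j})_{j∈J_i, t∈T_{i,j}} are pairwise disjoint and their union is a conull subset of X. Set E := Γ × I, S := {(γ, i, j) : γ ∈ Γ, i ∈ I, j ∈ J_i}, and W_{(γ,i,j)} := (γ·A_{i,j})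 × (γ·T_{i,j}^{−1}) × {i} ⊆ X × Γ × I. For a chain z = Σ_{e ∈ E^{n+1}} a_e·e ∈ ℤ[E^{n+1}] define Φ^δ(z)(x, s) := Σ_{e = (e_0,…,e_n)} a_e · Π_{r=0}^{n} χ_{W_{s_r}}(x, e_r) for x ∈ X and s = (s_0,…,s_n) ∈ S^{n+1}. If every tuple e with a_e ≠ 0 satisfies the F-colouring condition, then Σ_{s ∈ S^{n+1} essential} ∫_X |Φ^δ(z)(x, s)| dμ(x) ≤ δ · Σ_{e} |a_e|. -/
/-! For a fixed tuple `e` and point `x`, disjointness of the towers puts each `(x, e r)` in at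
most one Rokhlin set `W_s`, so the cells `{x | ∀ r, (x, e r) ∈ W_{s r}}` are pairwise disjoint
in `s` and `∫ |Φ^δ(z)(·, s)|` is bounded by `∑_e |a_e| μ(cell)`. If `e` is coloured by `k < l`
with `g = λ_k⁻¹ λ_l ∈ F ∩ Γ_i`, the cell of an injective `s` lies in `λ_l •` (the union of the
levels `t • A_{i,j}` with `g t ∉ T_{i,j}`): at any other point the set `W_{s l}` also contains
`(x, e k)`, forcing `s k = s l`. By `(F ∩ Γ_i, δ)`-invariance these levels make up at most a
`δ`-fraction of each tower, hence have measure at most `δ`.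
-/

open Pointwise MeasureTheory

open Classical in
/-- A nonempty finite subset `T ⊆ Γ` is `(F', δ)`-invariant if `|F'·T △ T| ≤ δ·|T|`. -/
def IsInvariantSubset {Γ : Type*} [Group Γ] (F' : Finset Γ) (δ : ℝ) (T : Finset Γ) : Prop :=
  T.Nonempty ∧ ((symmDiff (F' * T) T).card : ℝ) ≤ δ * (T.card : ℝ)

/-- The Borel sets
`W_{(γ,i,j)} = (γ • A_{i,j}) × (γ • T_{i,j}⁻¹) × {i} ⊆ X × Γ × I`
of the Rokhlin partition. -/
def rokhlinSet {X Γ I : Type*} [Group Γ] [MulAction Γ X] {J : I → Type*}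
    (A : ∀ i, J i → Set X) (T : ∀ i, J i → Finset Γ)
    (s : Γ × Σ i : I, J i) : Set (X × (Γ × I)) :=
  (s.1 • A s.2.1 s.2.2) ×ˢ ((s.1 • ((T s.2.1 s.2.2 : Set Γ)⁻¹)) ×ˢ ({s.2.1} : Set I))

/-- A tuple `((λ_0,t_0),…,(λ_n,t_n)) ∈ (Γ × I)^{n+1}` satisfies the `F`-colouring
condition if there are `i ∈ I` and `k < l` with `t_k = t_l = i` and
`λ_k⁻¹λ_l ∈ F ∩ Γ_i`. -/
def FColouring {Γ I : Type*} [Group Γ] (Γi : I → Subgroup Γ) (F : Finset Γ) {n : ℕ}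
    (e : Fin (n + 1) → Γ × I) : Prop :=
  ∃ k l : Fin (n + 1), k < l ∧ (e k).2 = (e l).2 ∧
    (e k).1⁻¹ * (e l).1 ∈ F ∧ (e k).1⁻¹ * (e l).1 ∈ Γi ((e k).2)

section MeasurePreservingAction

variable {G X : Type*} [Group G] [MulAction G X] [MeasurableSpace X] {μ : Measure X}

theorem measurableSet_smul_of_measurePreserving
    (hmp : ∀ g : G, MeasurePreserving (fun x : X => g • x) μ μ) (g : G) {B : Set X}
    (hB : MeasurableSet B) : MeasurableSet (g • B) := by
  rw [← Set.preimage_smul_inv]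
  exact (hmp g⁻¹).measurable hB

theorem measure_smul_of_measurePreserving
    (hmp : ∀ g : G, MeasurePreserving (fun x : X => g • x) μ μ) (g : G) {B : Set X}
    (hB : MeasurableSet B) : μ (g • B) = μ B := by
  rw [← Set.preimage_smul_inv]
  exact (hmp g⁻¹).measure_preimage hB.nullMeasurableSet

end MeasurePreservingAction

open Classical in
theorem IsInvariantSubset.card_filter_mul_notMem_le {Γ : Type*} [Group Γ] {F' : Finset Γ}
    {δ : ℝ} {T : Finset Γ} (hT : IsInvariantSubset F' δ T) {g : Γ} (hg : g ∈ F') :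
    ((T.filter fun t => g * t ∉ T).card : ℝ) ≤ δ * T.card := by
  refine le_trans (Nat.cast_le.mpr (Finset.card_le_card_of_injOn (g * ·) ?_ ?_)) hT.2
  · intro t ht
    rw [Finset.mem_coe, Finset.mem_filter] at ht
    exact Finset.mem_symmDiff.mpr (Or.inl ⟨Finset.mul_mem_mul hg ht.1, ht.2⟩)
  · exact fun a _ b _ hab => mul_left_cancel hab

section Tower

variable {X Γ J : Type*} [Group Γ] [MulAction Γ X] [MeasurableSpace X] {μ : Measure X}
  [Fintype J] {A : J → Set X} {T : J → Finset Γ}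

open Classical in
def towerBoundary (A : J → Set X) (T : J → Finset Γ) (g : Γ) : Set X :=
  ⋃ j, ⋃ t ∈ (T j).filter fun t => g * t ∉ T j, t • A j

variable (hmp : ∀ γ : Γ, MeasurePreserving (fun x : X => γ • x) μ μ)
  (hAmeas : ∀ j, MeasurableSet (A j))
include hmp hAmeas

theorem measurableSet_towerBoundary (g : Γ) : MeasurableSet (towerBoundary A T g) :=
  MeasurableSet.iUnion fun j => Finset.measurableSet_biUnion _ fun t _ =>
    measurableSet_smul_of_measurePreserving hmp t (hAmeas j)

variable (hdisj : ∀ (j : J) (t : Γ) (_ : t ∈ T j) (j' : J) (t' : Γ) (_ : t' ∈ T j'),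
  (⟨j, t⟩ : J × Γ) ≠ ⟨j', t'⟩ → Disjoint (t • A j) (t' • A j'))
include hdisj

theorem sum_card_mul_measure_le_measure_univ :
    ∑ j, ((T j).card : ENNReal) * μ (A j) ≤ μ Set.univ := by
  classical
  have hpd : (↑(Finset.univ.sigma T) : Set (Σ _ : J, Γ)).PairwiseDisjoint
      fun p => p.2 • A p.1 := by
    rintro ⟨j, t⟩ hp ⟨j', t'⟩ hq hne
    simp only [Finset.coe_sigma, Set.mem_sigma_iff, Finset.mem_coe] at hp hq
    exact hdisj j t hp.2 j' t' hq.2 fun h => hne (by cases h; rfl)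
  calc ∑ j, ((T j).card : ENNReal) * μ (A j)
      = ∑ p ∈ Finset.univ.sigma T, μ (p.2 • A p.1) := by
        rw [Finset.sum_sigma]
        refine Finset.sum_congr rfl fun j _ => ?_
        simp only [measure_smul_of_measurePreserving hmp _ (hAmeas j), Finset.sum_const,
          nsmul_eq_mul]
    _ = μ (⋃ p ∈ Finset.univ.sigma T, p.2 • A p.1) :=
        (measure_biUnion_finset hpd fun p _ =>
          measurableSet_smul_of_measurePreserving hmp _ (hAmeas _)).symm
    _ ≤ μ Set.univ := measure_mono (Set.subset_univ _)

theorem measure_towerBoundary_le [IsProbabilityMeasure μ] {F' : Finset Γ} {δ : ℝ}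
    (hinv : ∀ j, IsInvariantSubset F' δ (T j)) {g : Γ} (hg : g ∈ F') :
    μ (towerBoundary A T g) ≤ ENNReal.ofReal δ := by
  classical
  have hcard : ∀ j, (((T j).filter fun t => g * t ∉ T j).card : ENNReal) ≤
      ENNReal.ofReal δ * (T j).card := fun j => by
    rw [← ENNReal.ofReal_natCast, ← ENNReal.ofReal_natCast (T j).card,
      ← ENNReal.ofReal_mul' (Nat.cast_nonneg _)]
    exact ENNReal.ofReal_le_ofReal ((hinv j).card_filter_mul_notMem_le hg)
  calc μ (towerBoundary A T g)
      ≤ ∑ j, ∑ t ∈ (T j).filter fun t => g * t ∉ T j, μ (t • A j) :=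
        (measure_iUnion_fintype_le _ _).trans
          (Finset.sum_le_sum fun j _ => measure_biUnion_finset_le _ _)
    _ = ∑ j, (((T j).filter fun t => g * t ∉ T j).card : ENNReal) * μ (A j) := by
        refine Finset.sum_congr rfl fun j _ => ?_
        simp only [measure_smul_of_measurePreserving hmp _ (hAmeas j), Finset.sum_const,
          nsmul_eq_mul]
    _ ≤ ∑ j, ENNReal.ofReal δ * (T j).card * μ (A j) := by gcongr with j; exact hcard j
    _ = ENNReal.ofReal δ * ∑ j, ((T j).card : ENNReal) * μ (A j) := by
        simp only [Finset.mul_sum, mul_assoc]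
    _ ≤ ENNReal.ofReal δ := by
        simpa using mul_le_mul_right (sum_card_mul_measure_le_measure_univ hmp hAmeas hdisj) _

end Tower

section RokhlinSet

variable {X Γ I : Type*} [Group Γ] [MulAction Γ X] {J : I → Type*}
  {A : ∀ i, J i → Set X} {T : ∀ i, J i → Finset Γ}

theorem mem_rokhlinSet_iff {x : X} {e : Γ × I} {s : Γ × Σ i : I, J i} :
    (x, e) ∈ rokhlinSet A T s ↔
      x ∈ s.1 • A s.2.1 s.2.2 ∧ e.1⁻¹ * s.1 ∈ T s.2.1 s.2.2 ∧ e.2 = s.2.1 := by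
  simp [rokhlinSet, Set.mem_smul_set_iff_inv_smul_mem]

theorem eq_of_mem_rokhlinSet
    (hdisj : ∀ (i : I) (j : J i) (t : Γ) (_ : t ∈ T i j) (j' : J i) (t' : Γ)
      (_ : t' ∈ T i j'), (⟨j, t⟩ : J i × Γ) ≠ ⟨j', t'⟩ →
        Disjoint (t • A i j) (t' • A i j'))
    {x : X} {e : Γ × I} {s s' : Γ × Σ i : I, J i}
    (hs : (x, e) ∈ rokhlinSet A T s) (hs' : (x, e) ∈ rokhlinSet A T s') : s = s' := by
  obtain ⟨γ, i, j⟩ := s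
  obtain ⟨γ', i', j'⟩ := s'
  obtain ⟨hx, ht, rfl⟩ := mem_rokhlinSet_iff.mp hs
  obtain ⟨hx', ht', hi⟩ := mem_rokhlinSet_iff.mp hs'
  subst hi
  have hx₀ : e.1⁻¹ • x ∈ (e.1⁻¹ * γ) • A e.2 j := by
    rwa [mul_smul, Set.smul_mem_smul_set_iff]
  have hx₀' : e.1⁻¹ • x ∈ (e.1⁻¹ * γ') • A e.2 j' := by
    rwa [mul_smul, Set.smul_mem_smul_set_iff]
  by_contra hne
  refine Set.disjoint_left.mp (hdisj e.2 j _ ht j' _ ht' fun h => hne ?_) hx₀ hx₀'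
  simp only [Prod.mk.injEq, mul_right_inj] at h
  obtain ⟨rfl, rfl⟩ := h
  rfl

theorem measurableSet_setOf_mem_rokhlinSet [MeasurableSpace X] {μ : Measure X}
    (hmp : ∀ γ : Γ, MeasurePreserving (fun x : X => γ • x) μ μ)
    (hAmeas : ∀ i j, MeasurableSet (A i j)) (e : Γ × I) (s : Γ × Σ i : I, J i) :
    MeasurableSet {x | (x, e) ∈ rokhlinSet A T s} := by
  simp only [mem_rokhlinSet_iff, Set.ofPred_and]
  exact (measurableSet_smul_of_measurePreserving hmp _ (hAmeas _ _)).inter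
    ((MeasurableSet.const _).inter (MeasurableSet.const _))

end RokhlinSet

theorem lintegral_natAbs_sum_mul_indicator_le {α X : Type*} [MeasurableSpace X]
    (μ : Measure X) (z : α →₀ ℤ) {C : α → Set X} (hC : ∀ a, MeasurableSet (C a)) :
    ∫⁻ x, ((z.sum fun a c => c * (C a).indicator (fun _ => (1 : ℤ)) x).natAbs : ENNReal) ∂μ ≤
      ∑ a ∈ z.support, ((z a).natAbs : ENNReal) * μ (C a) := by
  have hpoint : ∀ x, ((z.sum fun a c => c * (C a).indicator (fun _ => (1 : ℤ)) x).natAbs :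
      ENNReal) ≤ ∑ a ∈ z.support, ((z a).natAbs : ENNReal) * (C a).indicator 1 x := by
    intro x
    refine (Nat.cast_le.mpr (Int.natAbs_sum_le _ _)).trans_eq ?_
    push_cast [Int.natAbs_mul]
    refine Finset.sum_congr rfl fun a _ => ?_
    by_cases hx : x ∈ C a <;> simp [hx]
  calc _ ≤ ∫⁻ x, ∑ a ∈ z.support, ((z a).natAbs : ENNReal) * (C a).indicator 1 x ∂μ :=
        lintegral_mono hpoint
    _ = ∑ a ∈ z.support, ((z a).natAbs : ENNReal) * μ (C a) := by
        rw [lintegral_finsetSum _ fun a _ => (measurable_one.indicator (hC a)).const_mul _]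
        simp only [lintegral_const_mul _ (measurable_one.indicator (hC _)),
          lintegral_indicator_one (hC _)]

section RokhlinCell

open Function

variable {X Γ I : Type*} [Group Γ] [MulAction Γ X] {J : I → Type*}
  {A : ∀ i, J i → Set X} {T : ∀ i, J i → Finset Γ} {n : ℕ}

def rokhlinCell (A : ∀ i, J i → Set X) (T : ∀ i, J i → Finset Γ)
    (s : Fin (n + 1) → Γ × Σ i : I, J i) (e : Fin (n + 1) → Γ × I) : Set X :=
  {x | ∀ r, (x, e r) ∈ rokhlinSet A T (s r)}

theorem prod_indicator_rokhlinSet (s : Fin (n + 1) → Γ × Σ i : I, J i)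
    (e : Fin (n + 1) → Γ × I) (x : X) :
    ∏ r, (rokhlinSet A T (s r)).indicator (fun _ => (1 : ℤ)) (x, e r) =
      (rokhlinCell A T s e).indicator (fun _ => 1) x := by
  by_cases hx : x ∈ rokhlinCell A T s e
  · rw [Set.indicator_of_mem hx]
    exact Finset.prod_eq_one fun r _ => Set.indicator_of_mem (hx r) _
  · obtain ⟨r, hr⟩ : ∃ r, (x, e r) ∉ rokhlinSet A T (s r) := by
      simpa [rokhlinCell] using hx
    rw [Set.indicator_of_notMem hx]
    exact Finset.prod_eq_zero (Finset.mem_univ r) (Set.indicator_of_notMem hr _)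

theorem measurableSet_rokhlinCell [MeasurableSpace X] {μ : Measure X}
    (hmp : ∀ γ : Γ, MeasurePreserving (fun x : X => γ • x) μ μ)
    (hAmeas : ∀ i j, MeasurableSet (A i j)) (s : Fin (n + 1) → Γ × Σ i : I, J i)
    (e : Fin (n + 1) → Γ × I) : MeasurableSet (rokhlinCell A T s e) := by
  rw [rokhlinCell, Set.ofPred_forall]
  exact MeasurableSet.iInter fun r => measurableSet_setOf_mem_rokhlinSet hmp hAmeas _ _

variable (hdisj : ∀ (i : I) (j : J i) (t : Γ) (_ : t ∈ T i j) (j' : J i) (t' : Γ)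
  (_ : t' ∈ T i j'), (⟨j, t⟩ : J i × Γ) ≠ ⟨j', t'⟩ → Disjoint (t • A i j) (t' • A i j'))
include hdisj

theorem pairwise_disjoint_rokhlinCell (e : Fin (n + 1) → Γ × I) :
    Pairwise (Disjoint on fun s => rokhlinCell A T s e) := by
  intro s s' hne
  refine Set.disjoint_left.mpr fun x hx hx' => hne (funext fun r => ?_)
  exact eq_of_mem_rokhlinSet hdisj (hx r) (hx' r)

theorem rokhlinCell_subset_smul_towerBoundary {s : Fin (n + 1) → Γ × Σ i : I, J i}
    (hs : Injective s) {e : Fin (n + 1) → Γ × I} {k l : Fin (n + 1)} (hkl : k ≠ l)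
    {i : I} (hk : (e k).2 = i) (hl : (e l).2 = i) :
    rokhlinCell A T s e ⊆ (e l).1 • towerBoundary (A i) (T i) ((e k).1⁻¹ * (e l).1) := by
  intro x hx
  rcases hsl : s l with ⟨γ, i', j⟩
  obtain ⟨hxγ, hγ, hi⟩ := mem_rokhlinSet_iff.mp (hsl ▸ hx l)
  dsimp only at hxγ hγ hi
  obtain rfl : i = i' := hl.symm.trans hi
  by_cases hgt : (e k).1⁻¹ * (e l).1 * ((e l).1⁻¹ * γ) ∈ T i j
  · have hxk : (x, e k) ∈ rokhlinSet A T (s l) := by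
      rw [hsl, mem_rokhlinSet_iff]
      refine ⟨hxγ, by simpa [mul_assoc] using hgt, hk⟩
    exact absurd (hs (eq_of_mem_rokhlinSet hdisj (hx k) hxk)) hkl
  · rw [Set.mem_smul_set_iff_inv_smul_mem, towerBoundary]
    simp only [Set.mem_iUnion, Finset.mem_filter]
    refine ⟨j, (e l).1⁻¹ * γ, ⟨hγ, hgt⟩, ?_⟩
    rwa [mul_smul, Set.smul_mem_smul_set_iff]

open Classical in
theorem tsum_measure_rokhlinCell_le [MeasurableSpace X] {μ : Measure X} [IsProbabilityMeasure μ]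
    [∀ i, Fintype (J i)] (hmp : ∀ γ : Γ, MeasurePreserving (fun x : X => γ • x) μ μ)
    (hAmeas : ∀ i j, MeasurableSet (A i j)) {Γi : I → Subgroup Γ} {F : Finset Γ} {δ : ℝ}
    (hTinv : ∀ i j, IsInvariantSubset (F.filter (fun g => g ∈ Γi i)) δ (T i j))
    {e : Fin (n + 1) → Γ × I} (he : FColouring Γi F e) :
    ∑' s : {s : Fin (n + 1) → Γ × Σ i : I, J i // Injective s}, μ (rokhlinCell A T s.1 e) ≤
      ENNReal.ofReal δ := by
  obtain ⟨k, l, hkl, hi, hgF, hgΓ⟩ := he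
  calc _ ≤ μ (⋃ s : {s : Fin (n + 1) → Γ × Σ i : I, J i // Injective s},
          rokhlinCell A T s.1 e) :=
        tsum_meas_le_meas_iUnion_of_disjoint μ (fun s => measurableSet_rokhlinCell hmp hAmeas _ e)
          ((pairwise_disjoint_rokhlinCell hdisj e).comp_of_injective Subtype.val_injective)
    _ ≤ μ ((e l).1 • towerBoundary (A (e k).2) (T (e k).2) ((e k).1⁻¹ * (e l).1)) :=
        measure_mono (Set.iUnion_subset fun s =>
          rokhlinCell_subset_smul_towerBoundary hdisj s.2 hkl.ne rfl hi.symm)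
    _ = μ (towerBoundary (A (e k).2) (T (e k).2) ((e k).1⁻¹ * (e l).1)) :=
        measure_smul_of_measurePreserving hmp _ (measurableSet_towerBoundary hmp (hAmeas _) _)
    _ ≤ ENNReal.ofReal δ :=
        measure_towerBoundary_le hmp (hAmeas _) (hdisj _) (hTinv _)
          (Finset.mem_filter.mpr ⟨hgF, hgΓ⟩)

end RokhlinCell

open Classical in
theorem rokhlin_chain_map_norm_estimate_general
    (Γ : Type*) [Group Γ]
    (I : Type*)
    (Γi : I → Subgroup Γ) (F : Finset Γ) (δ : ℝ)
    (X : Type*) [MeasurableSpace X]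
    (μ : Measure X) [IsProbabilityMeasure μ]
    [MulAction Γ X]
    (hmp : ∀ γ : Γ, MeasurePreserving (fun x : X => γ • x) μ μ)
    -- the Rokhlin partitions for the amenable subgroups `Γ_i`:
    (J : I → Type*) [∀ i, Fintype (J i)]
    (A : ∀ i, J i → Set X) (hAmeas : ∀ i j, MeasurableSet (A i j))
    (T : ∀ i, J i → Finset Γ)
    (hTinv : ∀ i j, IsInvariantSubset (F.filter (fun g => g ∈ Γi i)) δ (T i j))
    (hdisj : ∀ (i : I) (j : J i) (t : Γ) (_ : t ∈ T i j) (j' : J i) (t' : Γ)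
      (_ : t' ∈ T i j'), (⟨j, t⟩ : J i × Γ) ≠ ⟨j', t'⟩ →
        Disjoint (t • A i j) (t' • A i j'))
    -- the chain `z`, all of whose simplices satisfy the `F`-colouring condition:
    (n : ℕ) (z : (Fin (n + 1) → Γ × I) →₀ ℤ)
    (hz : ∀ e ∈ z.support, FColouring Γi F e) :
    -- `∑_{s ∈ S^{n+1} essential} ∫_X |Φ^δ(z)(x, s)| dμ(x) ≤ δ · ∑_e |a_e|`
    (∑' s : {s : Fin (n + 1) → Γ × Σ i : I, J i // Function.Injective s},
        ∫⁻ x : X,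
          (((z.sum fun e a => a * ∏ r : Fin (n + 1),
              (rokhlinSet A T (s.1 r)).indicator (fun _ => (1 : ℤ)) (x, e r)).natAbs :
            ℕ) : ENNReal) ∂μ) ≤
      ENNReal.ofReal δ * ∑ e ∈ z.support, ((z e).natAbs : ENNReal) := by
  calc _ ≤ ∑' s : {s : Fin (n + 1) → Γ × Σ i : I, J i // Function.Injective s},
          ∑ e ∈ z.support, ((z e).natAbs : ENNReal) * μ (rokhlinCell A T s.1 e) :=
        ENNReal.tsum_le_tsum fun s => by
          simp only [prod_indicator_rokhlinSet]
          exact lintegral_natAbs_sum_mul_indicator_le μ z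
            (measurableSet_rokhlinCell hmp hAmeas s.1)
    _ = ∑ e ∈ z.support, ((z e).natAbs : ENNReal) *
          ∑' s : {s : Fin (n + 1) → Γ × Σ i : I, J i // Function.Injective s},
            μ (rokhlinCell A T s.1 e) := by
        rw [Summable.tsum_finsetSum fun _ _ => ENNReal.summable]
        simp only [ENNReal.tsum_mul_left]
    _ ≤ ∑ e ∈ z.support, ((z e).natAbs : ENNReal) * ENNReal.ofReal δ :=
        Finset.sum_le_sum fun e he =>
          mul_le_mul_right (tsum_measure_rokhlinCell_le hdisj hmp hAmeas hTinv (hz e he)) _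
    _ = ENNReal.ofReal δ * ∑ e ∈ z.support, ((z e).natAbs : ENNReal) := by
        rw [← Finset.sum_mul, mul_comm]

open Classical in
/-- norm estimate for the Rokhlin chain map. In the Rokhlin
setup, if every tuple in the support of a chain `z ∈ ℤ[E^{n+1}]`, `E = Γ × I`,
satisfies the `F`-colouring condition, then the essential part of `Φ^δ(z)` has
`ℓ¹`-norm at most `δ · |z|₁`. -/
theorem rokhlin_chain_map_norm_estimate
    (Γ : Type*) [Group Γ] [Countable Γ]
    (I : Type*) [Fintype I] [Nonempty I]
    (Γi : I → Subgroup Γ) (F : Finset Γ) (δ : ℝ) (hδ : 0 < δ)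
    (X : Type*) [MeasurableSpace X] [StandardBorelSpace X]
    (μ : Measure X) [IsProbabilityMeasure μ]
    [MulAction Γ X]
    (hmp : ∀ γ : Γ, MeasurePreserving (fun x : X => γ • x) μ μ)
    (hfree : ∀ (γ : Γ) (x : X), γ • x = x → γ = 1)
    -- the Rokhlin partitions for the amenable subgroups `Γ_i`:
    (J : I → Type*) [∀ i, Fintype (J i)]
    (A : ∀ i, J i → Set X) (hAmeas : ∀ i j, MeasurableSet (A i j))
    (T : ∀ i, J i → Finset Γ)
    (hTsub : ∀ i j, ∀ t ∈ T i j, t ∈ Γi i)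
    (hTone : ∀ i j, (1 : Γ) ∈ T i j)
    (hTinv : ∀ i j, IsInvariantSubset (F.filter (fun g => g ∈ Γi i)) δ (T i j))
    (hdisj : ∀ (i : I) (j : J i) (t : Γ) (_ : t ∈ T i j) (j' : J i) (t' : Γ)
      (_ : t' ∈ T i j'), (⟨j, t⟩ : J i × Γ) ≠ ⟨j', t'⟩ →
        Disjoint (t • A i j) (t' • A i j'))
    (hconull : ∀ i : I, μ (⋃ (j : J i), ⋃ (t : Γ) (_ : t ∈ T i j), t • A i j)ᶜ = 0)
    -- the chain `z`, all of whose simplices satisfy the `F`-colouring condition: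
    (n : ℕ) (z : (Fin (n + 1) → Γ × I) →₀ ℤ)
    (hz : ∀ e ∈ z.support, FColouring Γi F e) :
    -- `∑_{s ∈ S^{n+1} essential} ∫_X |Φ^δ(z)(x, s)| dμ(x) ≤ δ · ∑_e |a_e|`
    (∑' s : {s : Fin (n + 1) → Γ × Σ i : I, J i // Function.Injective s},
        ∫⁻ x : X,
          (((z.sum fun e a => a * ∏ r : Fin (n + 1),
              (rokhlinSet A T (s.1 r)).indicator (fun _ => (1 : ℤ)) (x, e r)).natAbs :
            ℕ) : ENNReal) ∂μ) ≤
      ENNReal.ofReal δ * ∑ e ∈ z.support, ((z e).natAbs : ENNReal) :=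
  rokhlin_chain_map_norm_estimate_general Γ I Γi F δ X μ hmp J A hAmeas T hTinv hdisj n z hz
end

section
/- Let Γ be a countable group, let I be a nonempty finite set, let (Γ_i)_{i∈I} be subgroups of Γ, let F ⊆ Γ be a finite set, let δ > 0, and let Γ act freely and measure-preservingly on a standard Borel probability space (X, μ). Suppose that for each i ∈ I there are a finite set J_i, Borel sets (A_{i,j})_{j∈J_i} in X, and finite subsets (T_{i,j})_{j∈J_i} of Γ_i, each containing the neutral element and each (F ∩ Γ_i, δ)-invariant, such that the sets (t·A_{i,j})_{j∈J_i, t∈T_{i,j}} are pairwise disjoint and their union is a conull subset of X. Let n ∈ ℕ and let z = ((λ_0, t_0),…,(λ_n, t_n)) ∈ (Γ × I)^{n+1} be a tuple with λ_0 = 1, t_0 = t_1 =: i, and λ_1 ∈ F ∩ Γ_i. Let S := {(γ, i, j) : γ ∈ Γ, i ∈ I, j ∈ J_i} and W_{(γ,i,j)} := (γ·A_{i,j}) × (γ·T_{i,j}^{−1}) × {i} ⊆ X × Γ × I. Then Σ_{s = (s_0,…,s_n) ∈ S^{n+1} essential} μ({x ∈ X : (x, λ_r, t_r) ∈ W_{s_r}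 for all r ∈ {0,…,n}}) ≤ δ. -/
open Pointwise MeasureTheory

open Classical in
/-- In the Rokhlin setup, let `z = ((λ_0,t_0),…,(λ_n,t_n))` be a
tuple in `(Γ × I)^{n+1}` with `λ_0 = 1`, `t_0 = t_1 =: i` and `λ_1 ∈ F ∩ Γ_i`.
Then the total measure of the essential part of `Φ^δ` applied to `z` is at
most `δ`:
`∑_{s ∈ S^{n+1} essential} μ({x : (x, λ_r, t_r) ∈ W_{s_r} for all r}) ≤ δ`. -/
theorem rokhlin_single_simplex_estimate
    (Γ : Type*) [Group Γ] [Countable Γ]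
    (I : Type*) [Fintype I] [Nonempty I]
    (Γi : I → Subgroup Γ) (F : Finset Γ) (δ : ℝ) (hδ : 0 < δ)
    (X : Type*) [MeasurableSpace X] [StandardBorelSpace X]
    (μ : Measure X) [IsProbabilityMeasure μ]
    [MulAction Γ X]
    (hmp : ∀ γ : Γ, MeasurePreserving (fun x : X => γ • x) μ μ)
    (hfree : ∀ (γ : Γ) (x : X), γ • x = x → γ = 1)
    -- the Rokhlin partitions for the subgroups `Γ_i`:
    (J : I → Type*) [∀ i, Fintype (J i)]
    (A : ∀ i, J i → Set X) (hAmeas : ∀ i j, MeasurableSet (A i j))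
    (T : ∀ i, J i → Finset Γ)
    (hTsub : ∀ i j, ∀ t ∈ T i j, t ∈ Γi i)
    (hTone : ∀ i j, (1 : Γ) ∈ T i j)
    (hTinv : ∀ i j, IsInvariantSubset (F.filter (fun g => g ∈ Γi i)) δ (T i j))
    (hdisj : ∀ (i : I) (j : J i) (t : Γ) (_ : t ∈ T i j) (j' : J i) (t' : Γ)
      (_ : t' ∈ T i j'), (⟨j, t⟩ : J i × Γ) ≠ ⟨j', t'⟩ →
        Disjoint (t • A i j) (t' • A i j'))
    (hconull : ∀ i : I, μ (⋃ (j : J i), ⋃ (t : Γ) (_ : t ∈ T i j), t • A i j)ᶜ = 0)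
    -- the tuple `z = ((λ_0,t_0),…,(λ_n,t_n))`, `n ≥ 1`:
    (n : ℕ) (hn : 1 ≤ n) (lam : Fin (n + 1) → Γ) (t : Fin (n + 1) → I)
    (hlam0 : lam ⟨0, Nat.succ_pos n⟩ = 1)
    (ht01 : t ⟨0, Nat.succ_pos n⟩ = t ⟨1, Nat.lt_succ_of_le hn⟩)
    (hlam1F : lam ⟨1, Nat.lt_succ_of_le hn⟩ ∈ F)
    (hlam1Γi : lam ⟨1, Nat.lt_succ_of_le hn⟩ ∈ Γi (t ⟨0, Nat.succ_pos n⟩)) :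
    (∑' s : {s : Fin (n + 1) → Γ × Σ i : I, J i // Function.Injective s},
        μ {x : X | ∀ r : Fin (n + 1), (x, lam r, t r) ∈ rokhlinSet A T (s.1 r)}) ≤
      ENNReal.ofReal δ := by
  classical
  set z0 : Fin (n+1) := ⟨0, Nat.succ_pos n⟩ with hz0
  set z1 : Fin (n+1) := ⟨1, Nat.lt_succ_of_le hn⟩ with hz1
  have hz01 : z0 ≠ z1 := by simp [hz0, hz1, Fin.ext_iff]
  -- measurability and measure of translates
  have hpre : ∀ (γ : Γ) (i : I) (j : J i), γ • A i j = (fun x : X => γ⁻¹ • x) ⁻¹' (A i j) := by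
    intro γ i j
    ext x
    simp [Set.mem_smul_set_iff_inv_smul_mem]
  have hsmul_meas : ∀ (γ : Γ) (i : I) (j : J i), MeasurableSet (γ • A i j) := by
    intro γ i j
    rw [hpre]
    exact (hmp γ⁻¹).measurable (hAmeas i j)
  have hsmul_measure : ∀ (γ : Γ) (i : I) (j : J i), μ (γ • A i j) = μ (A i j) := by
    intro γ i j
    rw [hpre]
    exact (hmp γ⁻¹).measure_preimage (hAmeas i j).nullMeasurableSet
  -- membership characterization
  have hmem : ∀ (r : Fin (n+1)) (p : Γ × Σ i : I, J i) (x : X),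
      (x, lam r, t r) ∈ rokhlinSet A T p ↔
        x ∈ p.1 • A p.2.1 p.2.2 ∧ (lam r)⁻¹ * p.1 ∈ T p.2.1 p.2.2 ∧ t r = p.2.1 := by
    intro r p x
    simp only [rokhlinSet, Set.mem_prod, Set.mem_singleton_iff, and_congr_right_iff]
    intro _
    rw [Set.mem_smul_set_iff_inv_smul_mem, smul_eq_mul, Set.mem_inv, mul_inv_rev, inv_inv,
      Finset.mem_coe]
  -- key extraction
  have key : ∀ (r : Fin (n+1)) (p : Γ × Σ i : I, J i) (x : X),
      (x, lam r, t r) ∈ rokhlinSet A T p →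
      ∃ (j : J (t r)) (τ : Γ), τ ∈ T (t r) j ∧ p = ((lam r) * τ, ⟨t r, j⟩) ∧
        (lam r)⁻¹ • x ∈ τ • A (t r) j := by
    intro r p x h
    rw [hmem] at h
    obtain ⟨hx, hT, hi⟩ := h
    obtain ⟨γ, i', j'⟩ := p
    dsimp only at hx hT hi
    subst hi
    refine ⟨j', (lam r)⁻¹ * γ, hT, ?_, ?_⟩
    · simp
    · rw [mul_smul]
      exact Set.smul_mem_smul_set hx
  set E : {s : Fin (n + 1) → Γ × Σ i : I, J i // Function.Injective s} → Set X :=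
    fun s => {x : X | ∀ r, (x, lam r, t r) ∈ rokhlinSet A T (s.1 r)} with hE
  have hEmeas : ∀ s, MeasurableSet (E s) := by
    intro s
    have h1 : E s = ⋂ r, {x : X | (x, lam r, t r) ∈ rokhlinSet A T (s.1 r)} := by
      ext x; simp [hE]
    rw [h1]
    refine MeasurableSet.iInter fun r => ?_
    have h2 : {x : X | (x, lam r, t r) ∈ rokhlinSet A T (s.1 r)} =
        ((s.1 r).1 • A (s.1 r).2.1 (s.1 r).2.2) ∩
        {_x : X | (lam r)⁻¹ * (s.1 r).1 ∈ T (s.1 r).2.1 (s.1 r).2.2 ∧ t r = (s.1 r).2.1} := by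
      ext x
      simp only [Set.mem_setOf_eq, Set.mem_inter_iff]
      rw [hmem]
    rw [h2]
    refine (hsmul_meas _ _ _).inter ?_
    by_cases hC : ((lam r)⁻¹ * (s.1 r).1 ∈ T (s.1 r).2.1 (s.1 r).2.2 ∧ t r = (s.1 r).2.1)
    · simp only [hC]
      simp
    · simp only [hC]
      simp
  have hEdisj : Pairwise (Function.onFun Disjoint E) := by
    intro s s' hss
    have hex : ∃ r, s.1 r ≠ s'.1 r := by
      by_contra h
      push_neg at h
      exact hss (Subtype.ext (funext h))
    obtain ⟨r, hr⟩ := hex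
    rw [Function.onFun, Set.disjoint_left]
    intro x hx hx'
    simp only [hE, Set.mem_setOf_eq] at hx hx'
    obtain ⟨j, τ, hτ, hp, hxx⟩ := key r (s.1 r) x (hx r)
    obtain ⟨j', τ', hτ', hp', hxx'⟩ := key r (s'.1 r) x (hx' r)
    have hne : (⟨j, τ⟩ : J (t r) × Γ) ≠ ⟨j', τ'⟩ := by
      intro h
      rw [Prod.mk.injEq] at h
      apply hr
      rw [hp, hp', h.1, h.2]
    exact Set.disjoint_left.mp (hdisj (t r) j τ hτ j' τ' hτ' hne) hxx hxx'
  rw [← measure_iUnion hEdisj hEmeas]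
  set D : J (t z1) → Finset Γ := fun j => (lam z1 • T (t z1) j) \ T (t z1) j with hD
  have hUsub : (⋃ s, E s) ⊆ ⋃ j : J (t z1), ⋃ γ ∈ D j, γ • A (t z1) j := by
    rintro x hx
    simp only [Set.mem_iUnion] at hx
    obtain ⟨s, hxs⟩ := hx
    simp only [hE, Set.mem_setOf_eq] at hxs
    obtain ⟨j₀, τ₀, hτ₀, hp₀, hx₀⟩ := key z0 (s.1 z0) x (hxs z0)
    obtain ⟨j₁, τ₁, hτ₁, hp₁, hx₁'⟩ := key z1 (s.1 z1) x (hxs z1)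
    rw [hlam0, inv_one, one_smul] at hx₀
    have hx₁ : x ∈ (lam z1 * τ₁) • A (t z1) j₁ := by
      rw [mul_smul]
      exact Set.mem_smul_set_iff_inv_smul_mem.mpr hx₁'
    have hsne : s.1 z0 ≠ s.1 z1 := fun h => hz01 (s.2 h)
    have hnotinT : lam z1 * τ₁ ∉ T (t z1) j₁ := by
      have contra : ∀ (j₀' : J (t z0)) (τ₀' : Γ), τ₀' ∈ T (t z0) j₀' →
          x ∈ τ₀' • A (t z0) j₀' →
          ((τ₀', (⟨t z0, j₀'⟩ : Σ i : I, J i)) ≠ (lam z1 * τ₁, ⟨t z1, j₁⟩)) →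
          lam z1 * τ₁ ∈ T (t z1) j₁ → False := by
        rw [ht01]
        intro j₀' τ₀' hτ₀' hx₀' hne h1
        have hne' : (⟨j₀', τ₀'⟩ : J (t z1) × Γ) ≠ ⟨j₁, lam z1 * τ₁⟩ := by
          intro h
          rw [Prod.mk.injEq] at h
          exact hne (by rw [h.1, h.2])
        exact Set.disjoint_left.mp
          (hdisj (t z1) j₀' τ₀' hτ₀' j₁ (lam z1 * τ₁) h1 hne') hx₀' hx₁
      intro h1
      refine contra j₀ τ₀ hτ₀ hx₀ ?_ h1
      intro h
      apply hsne
      rw [hp₀, hp₁, hlam0, one_mul]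
      exact h
    simp only [Set.mem_iUnion]
    exact ⟨j₁, lam z1 * τ₁,
      Finset.mem_sdiff.mpr ⟨Finset.smul_mem_smul_finset hτ₁, hnotinT⟩, hx₁⟩
  have hlam1Γi' : lam z1 ∈ Γi (t z1) := ht01 ▸ hlam1Γi
  have hcard : ∀ j : J (t z1), ((D j).card : ℝ) ≤ δ * ((T (t z1) j).card : ℝ) := by
    intro j
    have hsub : D j ⊆ symmDiff ((F.filter (fun g => g ∈ Γi (t z1))) * T (t z1) j)
        (T (t z1) j) := by
      intro γ hγ
      rw [hD] at hγ
      obtain ⟨hγ1, hγ2⟩ := Finset.mem_sdiff.mp hγ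
      rw [Finset.mem_symmDiff]
      left
      refine ⟨?_, hγ2⟩
      obtain ⟨τ, hτ, hτγ⟩ := Finset.mem_smul_finset.mp hγ1
      rw [← hτγ]
      exact Finset.mul_mem_mul (Finset.mem_filter.mpr ⟨hlam1F, hlam1Γi'⟩) hτ
    exact le_trans (Nat.cast_le.mpr (Finset.card_le_card hsub)) (hTinv (t z1) j).2
  have htotal : ∑ j : J (t z1), ((T (t z1) j).card : ENNReal) * μ (A (t z1) j) ≤ 1 := by
    set P : Finset (Σ j : J (t z1), Γ) := Finset.univ.sigma (fun j => T (t z1) j) with hP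
    have hdisjP : (P : Set (Σ j : J (t z1), Γ)).PairwiseDisjoint
        (fun p => p.2 • A (t z1) p.1) := by
      rintro ⟨j, γ⟩ hp ⟨j', γ'⟩ hq hne
      rw [Finset.mem_coe, hP, Finset.mem_sigma] at hp hq
      refine hdisj (t z1) j γ hp.2 j' γ' hq.2 ?_
      intro h
      rw [Prod.mk.injEq] at h
      obtain ⟨h1, h2⟩ := h
      subst h1
      subst h2
      exact hne rfl
    have hsum := measure_biUnion_finset (μ := μ) hdisjP
      (fun p _ => hsmul_meas p.2 (t z1) p.1)
    calc ∑ j : J (t z1), ((T (t z1) j).card : ENNReal) * μ (A (t z1) j)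
        = ∑ j : J (t z1), ∑ γ ∈ T (t z1) j, μ (γ • A (t z1) j) := by
          refine Finset.sum_congr rfl fun j _ => ?_
          rw [Finset.sum_congr rfl fun γ _ => hsmul_measure γ (t z1) j, Finset.sum_const,
            nsmul_eq_mul]
      _ = ∑ p ∈ P, μ (p.2 • A (t z1) p.1) := by
          rw [hP, Finset.sum_sigma]
      _ = μ (⋃ p ∈ P, p.2 • A (t z1) p.1) := hsum.symm
      _ ≤ 1 := prob_le_one
  calc μ (⋃ s, E s) ≤ μ (⋃ j : J (t z1), ⋃ γ ∈ D j, γ • A (t z1) j) := measure_mono hUsub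
    _ ≤ ∑ j : J (t z1), ∑ γ ∈ D j, μ (γ • A (t z1) j) := by
        refine le_trans (measure_iUnion_fintype_le _ _) ?_
        exact Finset.sum_le_sum fun j _ => measure_biUnion_finset_le _ _
    _ = ∑ j : J (t z1), ((D j).card : ENNReal) * μ (A (t z1) j) := by
        refine Finset.sum_congr rfl fun j _ => ?_
        rw [Finset.sum_congr rfl fun γ _ => hsmul_measure γ (t z1) j, Finset.sum_const,
          nsmul_eq_mul]
    _ ≤ ∑ j : J (t z1), ENNReal.ofReal δ * (((T (t z1) j).card : ENNReal) * μ (A (t z1) j)) := by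
        refine Finset.sum_le_sum fun j _ => ?_
        rw [← mul_assoc]
        refine mul_le_mul_left ?_ _
        calc ((D j).card : ENNReal) = ENNReal.ofReal ((D j).card : ℝ) := by
              rw [ENNReal.ofReal_natCast]
          _ ≤ ENNReal.ofReal (δ * ((T (t z1) j).card : ℝ)) := ENNReal.ofReal_le_ofReal (hcard j)
          _ = ENNReal.ofReal δ * ((T (t z1) j).card : ENNReal) := by
              rw [ENNReal.ofReal_mul hδ.le, ENNReal.ofReal_natCast]
    _ = ENNReal.ofReal δ * ∑ j : J (t z1), ((T (t z1) j).card : ENNReal) * μ (A (t z1) j) := by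
        rw [Finset.mul_sum]
    _ ≤ ENNReal.ofReal δ * 1 := mul_le_mul_right htotal _
    _ = ENNReal.ofReal δ := mul_one _
end
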